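/- For a finite set F = {f_1 < ... < f_k} of positive integers and n ∈ σ_F, the exceptional Hermite polynomial H_n^F(x), defined as the Wronskian-type (k+1)×(k+1) determinant with first row (H_{n-u_F}(x), H_{n-u_F}'(x), ..., H_{n-u_F}^{(k)}(x)) and remaining rows (H_f(x), H_f'(x), ..., H_f^{(k)}(x)) for f ∈ F, is a polynomial of degree exactly n. -/

import Mathlib

/-!
Write `d₀ = n - u_F` and `d₁ < ⋯ < d_k` for the elements of `F`, so that `∑ dᵢ = n + binom(k+1,2)`.
Expanding the determinant, the term of a permutation `σ` is `±∏ᵢ H_{d_{σ i}}^{(i)}`, of degree at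
most `∑ dᵢ - ∑ i = n`, with `xⁿ`-coefficient `±∏ᵢ 2^{dᵢ} · d_{σ i}(d_{σ i} - 1)⋯(d_{σ i} - i + 1)`.
Summed over `σ`, the coefficient of `xⁿ` is `∏ᵢ 2^{dᵢ}` times the determinant of the falling
factorials `dᵢ(dᵢ - 1)⋯(dᵢ - j + 1)`, which equals the Vandermonde determinant of the `dᵢ`.
It is nonzero because `n ∉ u_F + F` makes the `dᵢ` distinct.
-/

open Polynomial

/-- The (physicists') Hermite polynomial `H_n`. -/
noncomputable def hermiteP (n : ℕ) : Polynomial ℝ :=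
  (n.factorial : ℝ) •
    ∑ j ∈ Finset.range (n / 2 + 1),
      ((-1 : ℝ) ^ j / ((j.factorial : ℝ) * ((n - 2 * j).factorial : ℝ))) •
        (C (2 : ℝ) * X) ^ (n - 2 * j)

/-- Hermite polynomial with integer index; zero for negative index. -/
noncomputable def hermiteZ (m : ℤ) : Polynomial ℝ :=
  if m < 0 then 0 else hermiteP m.toNat

/-- `u_F = ∑_{f ∈ F} f - binom(k+1,2)`. -/
def uF (F : Finset ℕ) : ℤ :=
  (∑ f ∈ F, (f : ℤ)) - ((F.card + 1).choose 2 : ℤ)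

/-- The exceptional Hermite polynomial `H_n^F`: the `(k+1)×(k+1)` Wronskian-type determinant
with first row `(H_{n-u_F}^{(j)}(x))_{j=0}^k` and remaining rows `(H_f^{(j)}(x))_{j=0}^k`
for `f ∈ F`. -/
noncomputable def excHermite (F : Finset ℕ) (n : ℤ) : Polynomial ℝ :=
  Matrix.det (Matrix.of (fun i j : Fin (F.card + 1) =>
    Fin.cases
      (derivative^[(j : ℕ)] (hermiteZ (n - uF F)))
      (fun i' : Fin F.card => derivative^[(j : ℕ)] (hermiteP (F.orderIsoOfFin rfl i' : ℕ)))
      i))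

theorem hermiteP_natDegree_le (n : ℕ) : (hermiteP n).natDegree ≤ n := by
  unfold hermiteP
  refine (natDegree_smul_le _ _).trans <| natDegree_sum_le_of_forall_le _ _ fun j _ => ?_
  refine (natDegree_smul_le _ _).trans <| natDegree_pow_le.trans ?_
  rw [natDegree_C_mul_X 2 two_ne_zero]
  omega

theorem hermiteP_coeff_self (n : ℕ) : (hermiteP n).coeff n = 2 ^ n := by
  unfold hermiteP
  simp only [coeff_smul, finsetSum_coeff, mul_pow, ← C_pow, coeff_C_mul, coeff_X_pow,
    smul_eq_mul]
  rw [Finset.sum_eq_single_of_mem 0 (by simp) fun j hj hj0 => ?_]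
  · have : (n.factorial : ℝ) ≠ 0 := by positivity
    field_simp
    simp
  · have : j ≤ n / 2 := Nat.lt_succ_iff.mp (Finset.mem_range.mp hj)
    rw [if_neg (by omega), mul_zero, mul_zero]

theorem coeff_prod_sum_of_natDegree_le {R ι : Type*} [CommSemiring R] (s : Finset ι)
    (f : ι → R[X]) (e : ι → ℕ) (h : ∀ i ∈ s, (f i).natDegree ≤ e i) :
    (∏ i ∈ s, f i).coeff (∑ i ∈ s, e i) = ∏ i ∈ s, (f i).coeff (e i) := by
  induction s using Finset.cons_induction with
  | empty => simp
  | cons a s _ ih =>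
    have hs : ∀ i ∈ s, (f i).natDegree ≤ e i := fun i hi => h i (Finset.mem_cons_of_mem hi)
    rw [Finset.prod_cons, Finset.sum_cons, Finset.prod_cons,
      coeff_mul_add_eq_of_natDegree_le (h a (Finset.mem_cons_self _ _))
        ((natDegree_prod_le _ _).trans (Finset.sum_le_sum hs)), ih hs]

section Wronskian

variable {R : Type*} [CommRing R] {N : ℕ}

noncomputable def wronskianMatrix (p : Fin N → R[X]) : Matrix (Fin N) (Fin N) R[X] :=
  Matrix.of fun i j => derivative^[(j : ℕ)] (p i)

theorem prod_iterate_derivative_natDegree_le_and_coeff (q : Fin N → R[X]) (e : Fin N → ℕ)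
    (hq : ∀ i, (q i).natDegree ≤ e i) {D : ℕ} (hD : D + ∑ i : Fin N, (i : ℕ) = ∑ i, e i) :
    (∏ i : Fin N, derivative^[(i : ℕ)] (q i)).natDegree ≤ D ∧
      (∏ i : Fin N, derivative^[(i : ℕ)] (q i)).coeff D =
        ∏ i, (e i).descFactorial i • (q i).coeff (e i) := by
  by_cases he : ∀ i : Fin N, (i : ℕ) ≤ e i
  · have hsum : ∑ i, (e i - i) = D := by
      rw [Finset.sum_tsub_distrib _ fun i _ => he i]
      omega
    have hdeg : ∀ i : Fin N, (derivative^[(i : ℕ)] (q i)).natDegree ≤ e i - i := fun i =>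
      (natDegree_iterate_derivative _ _).trans (Nat.sub_le_sub_right (hq i) _)
    subst hsum
    refine ⟨(natDegree_prod_le _ _).trans (Finset.sum_le_sum fun i _ => hdeg i), ?_⟩
    rw [coeff_prod_sum_of_natDegree_le _ _ _ fun i _ => hdeg i]
    refine Finset.prod_congr rfl fun i _ => ?_
    rw [coeff_iterate_derivative, Nat.sub_add_cancel (he i)]
  · push Not at he
    obtain ⟨i₀, hi₀⟩ := he
    have hzero : ∏ i : Fin N, derivative^[(i : ℕ)] (q i) = 0 :=
      Finset.prod_eq_zero (Finset.mem_univ i₀) (iterate_derivative_eq_zero ((hq i₀).trans_lt hi₀))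
    refine ⟨by simp [hzero], ?_⟩
    rw [hzero, coeff_zero, eq_comm]
    exact Finset.prod_eq_zero (Finset.mem_univ i₀)
      (by simp [Nat.descFactorial_eq_zero_iff_lt.mpr hi₀])

theorem det_wronskianMatrix_natDegree_le_and_coeff (p : Fin N → R[X]) (d : Fin N → ℕ)
    (hp : ∀ i, (p i).natDegree ≤ d i) {D : ℕ} (hD : D + ∑ i : Fin N, (i : ℕ) = ∑ i, d i) :
    (wronskianMatrix p).det.natDegree ≤ D ∧
      (wronskianMatrix p).det.coeff D =
        (Matrix.of fun i j : Fin N => (d i).descFactorial j • (p i).coeff (d i)).det := by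
  have key (σ : Equiv.Perm (Fin N)) :=
    prod_iterate_derivative_natDegree_le_and_coeff (fun i => p (σ i)) (fun i => d (σ i))
      (fun i => hp (σ i)) (hD.trans (Equiv.sum_comp σ d).symm)
  simp only [Matrix.det_apply, wronskianMatrix, Matrix.of_apply]
  refine ⟨natDegree_sum_le_of_forall_le _ _ fun σ _ => ?_, ?_⟩
  · exact (natDegree_smul_le _ _).trans (key σ).1
  · rw [finsetSum_coeff]
    exact Finset.sum_congr rfl fun σ _ => by rw [coeff_smul, (key σ).2]

theorem det_descFactorial_eq_det_vandermonde [IsDomain R] (d : Fin N → ℕ) :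
    (Matrix.of fun i j : Fin N => ((d i).descFactorial j : R)).det =
      (Matrix.vandermonde fun i => (d i : R)).det := by
  rw [Matrix.det_eval_matrixOfPolynomials_eq_det_vandermonde _ (fun j => descPochhammer R j)
    (fun j => descPochhammer_natDegree R j) (fun j => monic_descPochhammer R j)]
  simp only [descPochhammer_eval_eq_descFactorial]

theorem coeff_det_wronskianMatrix [IsDomain R] (p : Fin N → R[X]) (d : Fin N → ℕ)
    (hp : ∀ i, (p i).natDegree ≤ d i) {D : ℕ} (hD : D + ∑ i : Fin N, (i : ℕ) = ∑ i, d i) :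
    (wronskianMatrix p).det.coeff D =
      (∏ i, (p i).coeff (d i)) * (Matrix.vandermonde fun i => (d i : R)).det := by
  rw [(det_wronskianMatrix_natDegree_le_and_coeff p d hp hD).2,
    ← det_descFactorial_eq_det_vandermonde,
    ← Matrix.det_mul_column]
  simp only [nsmul_eq_mul, Matrix.of_apply, mul_comm]

end Wronskian

noncomputable def excHermiteDegrees (F : Finset ℕ) (m : ℕ) : Fin (F.card + 1) → ℕ :=
  Fin.cons m fun i => F.orderIsoOfFin rfl i

theorem excHermite_eq_det_wronskianMatrix (F : Finset ℕ) {n : ℤ} {m : ℕ}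
    (hm : (m : ℤ) = n - uF F) :
    excHermite F n = (wronskianMatrix fun i => hermiteP (excHermiteDegrees F m i)).det := by
  have hZ : hermiteZ (n - uF F) = hermiteP m := by
    rw [← hm, hermiteZ, if_neg (by omega), Int.toNat_natCast]
  refine congrArg Matrix.det (Matrix.ext fun i j => Fin.cases ?_ (fun i => ?_) i)
  · simp [wronskianMatrix, excHermiteDegrees, hZ]
  · simp [wronskianMatrix, excHermiteDegrees]

theorem sum_excHermiteDegrees (F : Finset ℕ) (m : ℕ) :
    ∑ i, excHermiteDegrees F m i = m + ∑ f ∈ F, f := by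
  rw [excHermiteDegrees, Fin.sum_cons, ← Finset.sum_coe_sort F]
  congr 1
  exact Fintype.sum_equiv (F.orderIsoOfFin rfl).toEquiv _ _ fun _ => rfl

theorem excHermiteDegrees_injective {F : Finset ℕ} {m : ℕ} (hm : m ∉ F) :
    Function.Injective (excHermiteDegrees F m) := by
  refine Fin.cons_injective_iff.2 ⟨?_, Subtype.val_injective.comp (F.orderIsoOfFin rfl).injective⟩
  rintro ⟨i, hi⟩
  exact hm (hi ▸ (F.orderIsoOfFin rfl i).2)

theorem sum_fin_val_eq_choose_two (k : ℕ) : ∑ j : Fin (k + 1), (j : ℕ) = (k + 1).choose 2 := by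
  rw [Fin.sum_univ_eq_sum_range (fun j => j), Finset.sum_range_id, Nat.choose_two_right]

theorem excHermite_degree_general (F : Finset ℕ)
    (n : ℕ) (hn1 : uF F ≤ (n : ℤ)) (hn2 : ∀ f ∈ F, (n : ℤ) ≠ uF F + f) :
    (excHermite F n).natDegree = n ∧ excHermite F n ≠ 0 := by
  obtain ⟨m, hm⟩ : ∃ m : ℕ, (m : ℤ) = n - uF F := ⟨_, Int.toNat_of_nonneg (sub_nonneg.2 hn1)⟩
  have hmF : m ∉ F := fun h => hn2 m h (by omega)
  set d := excHermiteDegrees F m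
  have hdeg (i) : (hermiteP (d i)).natDegree ≤ d i := hermiteP_natDegree_le _
  have hD : n + ∑ j : Fin (F.card + 1), (j : ℕ) = ∑ i, d i := by
    rw [sum_fin_val_eq_choose_two, sum_excHermiteDegrees]
    unfold uF at hm
    zify
    omega
  rw [excHermite_eq_det_wronskianMatrix F hm]
  have hcoeff : (wronskianMatrix fun i => hermiteP (d i)).det.coeff n ≠ 0 := by
    rw [coeff_det_wronskianMatrix _ d hdeg hD]
    refine mul_ne_zero (Finset.prod_ne_zero_iff.2 fun i _ => ?_)
      (Matrix.det_vandermonde_ne_zero_iff.2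
        (Nat.cast_injective.comp (excHermiteDegrees_injective hmF)))
    rw [hermiteP_coeff_self]
    positivity
  have hle := (det_wronskianMatrix_natDegree_le_and_coeff _ d hdeg hD).1
  exact ⟨natDegree_eq_of_le_of_coeff_ne_zero hle hcoeff, fun h => hcoeff (by rw [h, coeff_zero])⟩

theorem excHermite_degree (F : Finset ℕ) (hFne : F.Nonempty) (hFpos : ∀ f ∈ F, 0 < f)
    (n : ℕ) (hn1 : uF F ≤ (n : ℤ)) (hn2 : ∀ f ∈ F, (n : ℤ) ≠ uF F + f) :
    (excHermite F n).natDegree = n ∧ excHermite F n ≠ 0 :=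
  excHermite_degree_general F n hn1 hn2
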